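/- Let R be the renormalization on probability measures on X̄ = X ∪ {∂}: R(ν) = (ν|_X / ν(X), 0) if ν(X) ≠ 0 and R(ν) = δ_∂ otherwise. Then for self-mappings f, f' of X and subsets S, S' ⊆ X, one has R ∘ (f→_S)⋆ ∘ R ∘ (f'→_{S'})⋆ = R ∘ (f→_S ∘ f'→_{S'})⋆ as self-maps on probability measures on X̄; i.e., the renormalization can be factored out of compositions of pushforwards by forward mappings. -/

import Mathlib

open scoped Classical

/-- Forward mapping `f→_S : X̄ → X̄` (`∂` encoded by `none`). -/
noncomputable def forward {X : Type*} (f : X → X) (S : Finset X) :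
    Option X → Option X
  | none => none
  | some x => if f x ∈ S then some (f x) else none

/-- Pushforward of a finitely supported measure on `X̄` by a self-mapping of `X̄`. -/
noncomputable def push {X : Type*} [Fintype X] (g : Option X → Option X)
    (ν : Option X → NNReal) : Option X → NNReal :=
  fun o => ∑ o' ∈ Finset.univ.filter (fun o' => g o' = o), ν o'

/-- Renormalization: the normalized restriction of `ν` to `X` when `ν(X) ≠ 0`,
and the Dirac measure at the cemetery point `∂` otherwise. -/
noncomputable def renorm {X : Type*} [Fintype X] (ν : Option X → NNReal) :
    Option X → NNReal :=
  if (∑ x : X, ν (some x)) = 0 then (fun o => if o = none then 1 else 0)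
  else fun o =>
    match o with
    | none => 0
    | some x => ν (some x) / ∑ x : X, ν (some x)

/-!
`renorm ν` depends only on the restriction of `ν` to `X`, and only up to a nonzero scalar;
conversely, `renorm ν` restricted to `X` is a nonzero multiple of `ν` restricted to `X`.
A pushforward by a map fixing `∂` (such as `f→_S`) computes its values on `X` from
values on `X` alone, linearly. So the inner renormalization only rescales what the outer
one sees, and the outer one cancels the scalar.
-/

section

variable {X : Type*} [Fintype X]

lemma push_comp (g h : Option X → Option X) (ν : Option X → NNReal) :
    push g (push h ν) = push (g ∘ h) ν := by
  funext o
  simp only [push, Function.comp]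
  rw [← Finset.sum_fiberwise_of_maps_to (s := Finset.univ.filter (fun b => g (h b) = o)) (g := h)
    (t := Finset.univ.filter (fun a => g a = o)) (by simp)]
  refine Finset.sum_congr rfl fun a ha => Finset.sum_congr ?_ fun _ _ => rfl
  rw [Finset.filter_filter]
  exact Finset.filter_congr fun b _ => ⟨fun hb => ⟨hb ▸ (Finset.mem_filter.mp ha).2, hb⟩, And.right⟩

lemma push_some_eq_mul {g : Option X → Option X} (hg : g none = none)
    {μ ν : Option X → NNReal} {c : NNReal} (h : ∀ x, μ (some x) = c * ν (some x)) (y : X) :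
    push g μ (some y) = c * push g ν (some y) := by
  simp only [push, Finset.mul_sum]
  refine Finset.sum_congr rfl ?_
  rintro (_ | x) hx
  · simp [hg] at hx
  · exact h x

lemma renorm_eq_of_some_eq_mul {μ ν : Option X → NNReal} {c : NNReal} (hc : c ≠ 0)
    (h : ∀ x, μ (some x) = c * ν (some x)) : renorm μ = renorm ν := by
  have hsum : ∑ x : X, μ (some x) = c * ∑ x : X, ν (some x) := by
    simp only [h, Finset.mul_sum]
  unfold renorm
  rw [hsum]
  by_cases hν : ∑ x : X, ν (some x) = 0
  · simp [hν]
  · simp only [mul_eq_zero, hc, hν, or_self, if_false]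
    funext o
    rcases o with _ | x
    · rfl
    · simp only [h, mul_div_mul_left _ _ hc]

lemma exists_renorm_some_eq_mul (μ : Option X → NNReal) :
    ∃ c ≠ 0, ∀ x, renorm μ (some x) = c * μ (some x) := by
  by_cases hm : ∑ x : X, μ (some x) = 0
  · refine ⟨1, one_ne_zero, fun x => ?_⟩
    have hx : μ (some x) = 0 := Finset.sum_eq_zero_iff.mp hm x (Finset.mem_univ x)
    simp [renorm, hm, hx]
  · exact ⟨(∑ x : X, μ (some x))⁻¹, inv_ne_zero hm, fun x => by
      simp [renorm, hm, div_eq_inv_mul]⟩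

end

theorem renorm_push_forward_comp {X : Type*} [Fintype X]
    (f f' : X → X) (S S' : Finset X) :
    ∀ ν : Option X → NNReal, (∑ o : Option X, ν o = 1) →
      renorm (push (forward f S) (renorm (push (forward f' S') ν))) =
        renorm (push (forward f S ∘ forward f' S') ν) := by
  intro ν _
  obtain ⟨c, hc, hrenorm⟩ := exists_renorm_some_eq_mul (push (forward f' S') ν)
  rw [← push_comp]
  exact renorm_eq_of_some_eq_mul hc (push_some_eq_mul rfl hrenorm)
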